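/- Let c > 0, 0 < r < T, and let Λ ⊆ 𝓛 be a countable set. Then #(Λ ∩ (F_{T,c} ∖ F_{r,c})) ≤ (1/r)·∫₀^T #{v ∈ Λ : g_t v ∈ F_{r,c}} dt ≤ #(Λ ∩ F_{T+r,c}), where the cardinalities and the integral are taken in the extended nonnegative reals [0,∞]. -/

import Mathlib

noncomputable section

open MeasureTheory Metric Filter Topology
open scoped ENNReal

/-- The index of the coordinate `x_{n+2}` (0-indexed: `n+1`). -/
def lastC (n : ℕ) : Fin (n + 2) := Fin.last (n + 1)

/-- The index of the coordinate `x_{n+1}` (0-indexed: `n`). -/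
def sndC (n : ℕ) : Fin (n + 2) := ⟨n, by omega⟩

/-- The quadratic form `Q(x) = x_1² + ⋯ + x_{n+1}² − x_{n+2}²`. -/
def Qf (n : ℕ) (x : EuclideanSpace ℝ (Fin (n + 2))) : ℝ :=
  (∑ i : Fin (n + 1), x (Fin.castSucc i) ^ 2) - x (lastC n) ^ 2

/-- The positive light cone. -/
def lightCone (n : ℕ) : Set (EuclideanSpace ℝ (Fin (n + 2))) :=
  {x | Qf n x = 0 ∧ 0 ≤ x (lastC n)}

/-- `Λ₀`: the intersection of the light cone with `ℤ^{n+1} × ℤ_{>0}`. -/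
def Lat0 (n : ℕ) : Set (EuclideanSpace ℝ (Fin (n + 2))) :=
  {x | x ∈ lightCone n ∧ (∀ i, ∃ m : ℤ, x i = (m : ℝ)) ∧ 0 < x (lastC n)}

/-- The set `F_{T,c}`. -/
def Fset (n : ℕ) (T c : ℝ) : Set (EuclideanSpace ℝ (Fin (n + 2))) :=
  {x | x ∈ lightCone n ∧ x (lastC n) ^ 2 - x (sndC n) ^ 2 < c ^ 2 ∧
    1 ≤ x (sndC n) + x (lastC n) ∧ x (sndC n) + x (lastC n) < Real.exp T}

/-- The set `E_{T,c}`. -/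
def Eset (n : ℕ) (T c : ℝ) : Set (EuclideanSpace ℝ (Fin (n + 2))) :=
  {x | x ∈ lightCone n ∧ 2 * x (lastC n) * (x (lastC n) - x (sndC n)) < c ^ 2 ∧
    1 ≤ x (lastC n) ∧ x (lastC n) < Real.cosh T}

/-- The first `n+1` coordinates of a point of `ℝ^{n+2}`. -/
def firstPart (n : ℕ) (x : EuclideanSpace ℝ (Fin (n + 2))) : EuclideanSpace ℝ (Fin (n + 1)) :=
  WithLp.toLp 2 (fun i => x (Fin.castSucc i))

/-- The one-parameter diagonal flow `g_t`. -/
def gmap (n : ℕ) (t : ℝ) (x : EuclideanSpace ℝ (Fin (n + 2))) :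
    EuclideanSpace ℝ (Fin (n + 2)) :=
  WithLp.toLp 2 (fun i =>
    if i = sndC n then Real.cosh t * x (sndC n) - Real.sinh t * x (lastC n)
    else if i = lastC n then - Real.sinh t * x (sndC n) + Real.cosh t * x (lastC n)
    else x i)

/-! On the light cone, `g_t` preserves `x_{n+2}² - x_{n+1}²` and multiplies
`u = x_{n+1} + x_{n+2}` by `e^{-t}`. Hence `g_t v ∈ F_{r,c}` holds exactly when
`v_{n+2}² - v_{n+1}² < c²`, `u > 0` and `t` lies in the window `(log u - r, log u]` of length
`r`. By Tonelli the orbit integral is the sum over `v ∈ Λ` of the length of this window inside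
`[0, T]`; that length is `r` when `log u ∈ [r, T]` (e.g. `v ∈ F_{T,c} \ F_{r,c}`), and it is at
most `r` and vanishes unless `log u ∈ [0, T + r)`, i.e. `v ∈ F_{T+r,c}`. -/

open Set

section WindowCounting

variable {ι : Type*} {S : Set ι}

theorem encard_sep_eq_tsum_indicator {α : Type*} (I : ι → Set α) (x : α) :
    ({i ∈ S | x ∈ I i}.encard : ℝ≥0∞) = ∑' i : S, (I i).indicator 1 x := by
  rw [← ENNReal.tsum_set_one, tsum_subtype _ (fun _ => (1 : ℝ≥0∞)),
    tsum_subtype S fun i => (I i).indicator 1 x]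
  congr 1 with i
  by_cases hi : i ∈ S <;> by_cases hx : x ∈ I i <;> simp [hi, hx]

theorem lintegral_encard_sep_mem {α : Type*} [MeasurableSpace α] (μ : Measure α)
    (hS : S.Countable) {I : ι → Set α} (hI : ∀ i, MeasurableSet (I i)) :
    ∫⁻ x, ({i ∈ S | x ∈ I i}.encard : ℝ≥0∞) ∂μ = ∑' i : S, μ (I i) := by
  have := hS.to_subtype
  simp_rw [encard_sep_eq_tsum_indicator]
  rw [lintegral_tsum fun i : S => (measurable_one.indicator (hI i)).aemeasurable]
  simp_rw [lintegral_indicator_one (hI _)]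

theorem tsum_indicator_preimage_const (s : ι → ℝ) (K : Set ℝ) (a : ℝ≥0∞) :
    ∑' i : S, K.indicator (fun _ => a) (s i) = (S ∩ s ⁻¹' K).encard * a := by
  rw [← ENNReal.tsum_set_const, tsum_subtype _ (fun _ => a),
    tsum_subtype S fun i => K.indicator (fun _ => a) (s i)]
  congr 1 with i
  by_cases hi : i ∈ S <;> by_cases hx : s i ∈ K <;> simp [hi, hx]

theorem indicator_Icc_le_volume_Ioc_inter_Icc (s r a b : ℝ) :
    (Icc (a + r) b).indicator (fun _ => ENNReal.ofReal r) s ≤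
      volume (Ioc (s - r) s ∩ Icc a b) := by
  by_cases hs : s ∈ Icc (a + r) b
  · rw [indicator_of_mem hs, ← sub_sub_cancel s r, ← Real.volume_Ioc, sub_sub_cancel]
    refine measure_mono fun t ht => ⟨ht, ?_, ?_⟩ <;> linarith [ht.1, ht.2, hs.1, hs.2]
  · simp [indicator_of_notMem hs]

theorem volume_Ioc_inter_Icc_le_indicator_Ico (s r a b : ℝ) :
    volume (Ioc (s - r) s ∩ Icc a b) ≤
      (Ico a (b + r)).indicator (fun _ => ENNReal.ofReal r) s := by
  by_cases hs : s ∈ Ico a (b + r)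
  · rw [indicator_of_mem hs]
    calc volume (Ioc (s - r) s ∩ Icc a b) ≤ volume (Ioc (s - r) s) :=
          measure_mono inter_subset_left
      _ = ENNReal.ofReal r := by rw [Real.volume_Ioc, sub_sub_cancel]
  · have hempty : Ioc (s - r) s ∩ Icc a b = ∅ :=
      eq_empty_of_forall_notMem fun t ⟨⟨h1, h2⟩, h3, h4⟩ => hs ⟨by linarith, by linarith⟩
    simp [hempty]

theorem lintegral_Icc_encard_sep_mem_Ioc (hS : S.Countable) (s : ι → ℝ) (r a b : ℝ) :
    ∫⁻ t in Icc a b, ({i ∈ S | t ∈ Ioc (s i - r) (s i)}.encard : ℝ≥0∞) =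
      ∑' i : S, volume (Ioc (s i - r) (s i) ∩ Icc a b) := by
  rw [lintegral_encard_sep_mem _ hS fun _ => measurableSet_Ioc]
  simp_rw [Measure.restrict_apply measurableSet_Ioc]

theorem encard_mul_le_lintegral_Icc_encard_sep_mem_Ioc (hS : S.Countable) (s : ι → ℝ)
    (r a b : ℝ) :
    (S ∩ s ⁻¹' Icc (a + r) b).encard * ENNReal.ofReal r ≤
      ∫⁻ t in Icc a b, ({i ∈ S | t ∈ Ioc (s i - r) (s i)}.encard : ℝ≥0∞) := by
  rw [lintegral_Icc_encard_sep_mem_Ioc hS, ← tsum_indicator_preimage_const]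
  exact ENNReal.tsum_le_tsum fun i => indicator_Icc_le_volume_Ioc_inter_Icc _ _ _ _

theorem lintegral_Icc_encard_sep_mem_Ioc_le_encard_mul (hS : S.Countable) (s : ι → ℝ)
    (r a b : ℝ) :
    ∫⁻ t in Icc a b, ({i ∈ S | t ∈ Ioc (s i - r) (s i)}.encard : ℝ≥0∞) ≤
      (S ∩ s ⁻¹' Ico a (b + r)).encard * ENNReal.ofReal r := by
  rw [lintegral_Icc_encard_sep_mem_Ioc hS, ← tsum_indicator_preimage_const]
  exact ENNReal.tsum_le_tsum fun i => volume_Ioc_inter_Icc_le_indicator_Ico _ _ _ _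

end WindowCounting

theorem Real.one_le_and_lt_exp_iff {u T : ℝ} :
    1 ≤ u ∧ u < Real.exp T ↔ 0 < u ∧ Real.log u ∈ Ico 0 T := by
  constructor
  · rintro ⟨h1, hT⟩
    have hu : 0 < u := by linarith
    exact ⟨hu, (Real.log_nonneg_iff hu).2 h1, (Real.log_lt_iff_lt_exp hu).2 hT⟩
  · rintro ⟨hu, h0, hT⟩
    exact ⟨(Real.log_nonneg_iff hu).1 h0, (Real.log_lt_iff_lt_exp hu).1 hT⟩

def nullCoord (n : ℕ) (x : EuclideanSpace ℝ (Fin (n + 2))) : ℝ := x (sndC n) + x (lastC n)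

section LightCone

variable {n : ℕ}

theorem sndC_ne_lastC (n : ℕ) : sndC n ≠ lastC n :=
  fun h => by simp [sndC, lastC, Fin.ext_iff] at h

theorem gmap_apply_sndC (t : ℝ) (x : EuclideanSpace ℝ (Fin (n + 2))) :
    gmap n t x (sndC n) = Real.cosh t * x (sndC n) - Real.sinh t * x (lastC n) := by
  simp [gmap]

theorem gmap_apply_lastC (t : ℝ) (x : EuclideanSpace ℝ (Fin (n + 2))) :
    gmap n t x (lastC n) = -Real.sinh t * x (sndC n) + Real.cosh t * x (lastC n) := by
  simp [gmap, (sndC_ne_lastC n).symm]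

theorem gmap_apply_castSucc_castSucc (t : ℝ) (x : EuclideanSpace ℝ (Fin (n + 2))) (j : Fin n) :
    gmap n t x j.castSucc.castSucc = x j.castSucc.castSucc := by
  have hs : j.castSucc.castSucc ≠ sndC n := by simp [sndC, Fin.ext_iff, j.isLt.ne]
  have hl : j.castSucc.castSucc ≠ lastC n := by simp [lastC, Fin.ext_iff]; omega
  simp [gmap, hs, hl]

theorem Qf_eq_sum_add_sq_sub_sq (x : EuclideanSpace ℝ (Fin (n + 2))) :
    Qf n x = ∑ j : Fin n, x j.castSucc.castSucc ^ 2 + x (sndC n) ^ 2 - x (lastC n) ^ 2 := by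
  rw [Qf, Fin.sum_univ_castSucc]
  rfl

theorem sq_sndC_le_sq_lastC {x : EuclideanSpace ℝ (Fin (n + 2))} (hx : x ∈ lightCone n) :
    x (sndC n) ^ 2 ≤ x (lastC n) ^ 2 := by
  have hQ := hx.1
  rw [Qf_eq_sum_add_sq_sub_sq] at hQ
  linarith [Finset.sum_nonneg fun (j : Fin n) (_ : j ∈ Finset.univ) =>
    sq_nonneg (x j.castSucc.castSucc)]

theorem gmap_lastC_sq_sub_sndC_sq (t : ℝ) (x : EuclideanSpace ℝ (Fin (n + 2))) :
    gmap n t x (lastC n) ^ 2 - gmap n t x (sndC n) ^ 2 = x (lastC n) ^ 2 - x (sndC n) ^ 2 := by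
  rw [gmap_apply_sndC, gmap_apply_lastC]
  linear_combination (x (lastC n) ^ 2 - x (sndC n) ^ 2) * Real.cosh_sq t

theorem Qf_gmap (t : ℝ) (x : EuclideanSpace ℝ (Fin (n + 2))) : Qf n (gmap n t x) = Qf n x := by
  simp only [Qf_eq_sum_add_sq_sub_sq, gmap_apply_castSucc_castSucc]
  linarith [gmap_lastC_sq_sub_sndC_sq t x]

theorem nullCoord_gmap (t : ℝ) (x : EuclideanSpace ℝ (Fin (n + 2))) :
    nullCoord n (gmap n t x) = Real.exp (-t) * nullCoord n x := by
  rw [nullCoord, nullCoord, gmap_apply_sndC, gmap_apply_lastC, ← Real.cosh_sub_sinh]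
  ring

theorem gmap_mem_lightCone {x : EuclideanSpace ℝ (Fin (n + 2))} (t : ℝ)
    (hx : x ∈ lightCone n) : gmap n t x ∈ lightCone n := by
  refine ⟨(Qf_gmap t x).trans hx.1, ?_⟩
  have hsinh : |Real.sinh t| ≤ Real.cosh t :=
    abs_le_of_sq_le_sq (by nlinarith [Real.cosh_sq t]) (Real.cosh_pos t).le
  have hx' : |x (sndC n)| ≤ x (lastC n) := abs_le_of_sq_le_sq (sq_sndC_le_sq_lastC hx) hx.2
  have : Real.sinh t * x (sndC n) ≤ Real.cosh t * x (lastC n) :=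
    calc Real.sinh t * x (sndC n) ≤ |Real.sinh t| * |x (sndC n)| := by
          rw [← abs_mul]; exact le_abs_self _
      _ ≤ Real.cosh t * x (lastC n) := mul_le_mul hsinh hx' (abs_nonneg _) (Real.cosh_pos t).le
  rw [gmap_apply_lastC]
  linarith

theorem mem_Fset_iff {x : EuclideanSpace ℝ (Fin (n + 2))} {T c : ℝ} :
    x ∈ Fset n T c ↔ x ∈ lightCone n ∧ x (lastC n) ^ 2 - x (sndC n) ^ 2 < c ^ 2 ∧
      0 < nullCoord n x ∧ Real.log (nullCoord n x) ∈ Ico 0 T := by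
  simp only [Fset, mem_ofPred_eq, ← Real.one_le_and_lt_exp_iff, nullCoord]

theorem gmap_mem_Fset_iff {x : EuclideanSpace ℝ (Fin (n + 2))} (hx : x ∈ lightCone n)
    (t ρ c : ℝ) :
    gmap n t x ∈ Fset n ρ c ↔ (x (lastC n) ^ 2 - x (sndC n) ^ 2 < c ^ 2 ∧ 0 < nullCoord n x) ∧
      t ∈ Ioc (Real.log (nullCoord n x) - ρ) (Real.log (nullCoord n x)) := by
  rw [mem_Fset_iff, gmap_lastC_sq_sub_sndC_sq, nullCoord_gmap,
    mul_pos_iff_of_pos_left (Real.exp_pos _)]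
  simp only [gmap_mem_lightCone t hx, true_and, and_assoc, and_congr_right_iff]
  intro _ hu
  rw [Real.log_mul (Real.exp_pos _).ne' hu.ne', Real.log_exp, mem_Ico, mem_Ioc]
  constructor <;> rintro ⟨h1, h2⟩ <;> constructor <;> linarith

end LightCone

theorem siegel_transform_orbit_integral_sandwich_general (n : ℕ)
    (c r T : ℝ) (hr : 0 < r)
    (Λ : Set (EuclideanSpace ℝ (Fin (n + 2)))) (hΛc : Λ.Countable)
    (hΛL : Λ ⊆ lightCone n) :
    ((Λ ∩ (Fset n T c \ Fset n r c)).encard : ℝ≥0∞) ≤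
        (1 / ENNReal.ofReal r) *
          ∫⁻ t in Set.Icc (0 : ℝ) T, ({v ∈ Λ | gmap n t v ∈ Fset n r c}.encard : ℝ≥0∞) ∧
      (1 / ENNReal.ofReal r) *
          ∫⁻ t in Set.Icc (0 : ℝ) T, ({v ∈ Λ | gmap n t v ∈ Fset n r c}.encard : ℝ≥0∞) ≤
        ((Λ ∩ Fset n (T + r) c).encard : ℝ≥0∞) := by
  set S := {v ∈ Λ | v (lastC n) ^ 2 - v (sndC n) ^ 2 < c ^ 2 ∧ 0 < nullCoord n v}
  set s := fun v => Real.log (nullCoord n v)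
  have hS : S.Countable := hΛc.mono (sep_subset _ _)
  have h_count (t : ℝ) :
      {v ∈ Λ | gmap n t v ∈ Fset n r c} = {v ∈ S | t ∈ Ioc (s v - r) (s v)} := by
    ext v
    constructor
    · rintro ⟨hv, ht⟩
      exact ⟨⟨hv, ((gmap_mem_Fset_iff (hΛL hv) t r c).1 ht).1⟩,
        ((gmap_mem_Fset_iff (hΛL hv) t r c).1 ht).2⟩
    · rintro ⟨⟨hv, hvS⟩, ht⟩
      exact ⟨hv, (gmap_mem_Fset_iff (hΛL hv) t r c).2 ⟨hvS, ht⟩⟩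
  have h_low : Λ ∩ (Fset n T c \ Fset n r c) ⊆ S ∩ s ⁻¹' Icc (0 + r) T := by
    rintro v ⟨hv, hT, hnr⟩
    obtain ⟨hcone, hd, hu, h0, hlt⟩ := mem_Fset_iff.1 hT
    refine ⟨⟨hv, hd, hu⟩, ?_, hlt.le⟩
    by_contra! hsr
    exact hnr (mem_Fset_iff.2 ⟨hcone, hd, hu, h0, by linarith⟩)
  have h_up : S ∩ s ⁻¹' Ico 0 (T + r) ⊆ Λ ∩ Fset n (T + r) c :=
    fun v ⟨⟨hv, hd, hu⟩, hs⟩ => ⟨hv, mem_Fset_iff.2 ⟨hΛL hv, hd, hu, hs⟩⟩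
  have hr0 : ENNReal.ofReal r ≠ 0 := (ENNReal.ofReal_pos.2 hr).ne'
  simp only [h_count]
  simp only [one_div, ← ENNReal.div_eq_inv_mul]
  constructor
  · rw [ENNReal.le_div_iff_mul_le (Or.inl hr0) (Or.inl ENNReal.ofReal_ne_top)]
    exact le_trans (by gcongr) (encard_mul_le_lintegral_Icc_encard_sep_mem_Ioc hS s r 0 T)
  · refine ENNReal.div_le_of_le_mul
      ((lintegral_Icc_encard_sep_mem_Ioc_le_encard_mul hS s r 0 T).trans ?_)
    gcongr

/-- **Equation (4.1)**: sandwiching the orbit integral of the Siegel transform of the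
characteristic function of `F_{r,c}` between lattice point counts. -/
theorem siegel_transform_orbit_integral_sandwich (n : ℕ) (hn : 1 ≤ n)
    (c r T : ℝ) (hc : 0 < c) (hr : 0 < r) (hrT : r < T)
    (Λ : Set (EuclideanSpace ℝ (Fin (n + 2)))) (hΛc : Λ.Countable)
    (hΛL : Λ ⊆ lightCone n) :
    ((Λ ∩ (Fset n T c \ Fset n r c)).encard : ℝ≥0∞) ≤
        (1 / ENNReal.ofReal r) *
          ∫⁻ t in Set.Icc (0 : ℝ) T, ({v ∈ Λ | gmap n t v ∈ Fset n r c}.encard : ℝ≥0∞) ∧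
      (1 / ENNReal.ofReal r) *
          ∫⁻ t in Set.Icc (0 : ℝ) T, ({v ∈ Λ | gmap n t v ∈ Fset n r c}.encard : ℝ≥0∞) ≤
        ((Λ ∩ Fset n (T + r) c).encard : ℝ≥0∞) :=
  siegel_transform_orbit_integral_sandwich_general n c r T hr Λ hΛc hΛL
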